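/- There exists a language H ⊆ {0,1,#}* decided by some scaffolding automaton such that for every D ∈ ℕ, E_H(ℓ_D, D) ≥ 2^(2^D), where ℓ_D = D + 1 + Σ_{n=0}^{2^(D+1)−1} (2·|n|₂ + 2) and |n|₂ denotes the length of the shortest binary representation of n (so ℓ_D = O(D·2^D)); consequently, for every function t : ℕ → ℕ with t(n) = o(n/(log n)²), H does not belong to Online(t(n)). -/

import Mathlib

/-! ## Scaffolding automata -/

/-- A `(d,Γ)`-scaffold: nodes `0, …, top`, each node `v` carrying
`d` (possibly missing) edges pointing backwards (to nodes `≤ v`)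
and an optional label from `Γ`.  (The data of the functions at indices
beyond `top` is irrelevant.) -/
structure Scaffold (d : ℕ) (Γ : Type) : Type where
  top : ℕ
  edge : ℕ → Fin d → Option ℕ
  label : ℕ → Option Γ
  back : ∀ v i w, edge v i = some w → w ≤ v

/-- The type of `k`-neighbourhoods for `(d,Γ)`-scaffolds:
`N₀ = Γ ∪ {∅}` and `N_{k+1} = (Γ ∪ {∅}) × (N_k ∪ {∅})^d`. -/
def Nbhd (d : ℕ) (Γ : Type) : ℕ → Type
  | 0 => Option Γ
  | k + 1 => Option Γ × (Fin d → Option (Nbhd d Γ k))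

/-- The `k`-neighbourhood of node `v` in a scaffold. -/
def Scaffold.nbhd {d : ℕ} {Γ : Type} (S : Scaffold d Γ) : (k : ℕ) → ℕ → Nbhd d Γ k
  | 0, v => S.label v
  | k + 1, v => (S.label v, fun i => (S.edge v i).map (S.nbhd k))

/-- The specification of an edge of a newly created node: either a path
(a sequence of at most `k` edge indices, to be followed from the old top node),
or `SELF` (the new node itself), or `missing` (no edge, `∅`). -/
inductive PathSpec (d k : ℕ) : Type where
  | path (l : List (Fin d)) (h : l.length ≤ k) : PathSpec d k
  | self : PathSpec d k
  | missing : PathSpec d k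

/-- Following a path (sequence of edge indices) from node `v` in a scaffold;
returns `none` if the path is invalid. -/
def Scaffold.follow {d : ℕ} {Γ : Type} (S : Scaffold d Γ) :
    List (Fin d) → ℕ → Option ℕ
  | [], v => some v
  | i :: l, v => (S.edge v i).bind (S.follow l)

theorem Scaffold.follow_le {d : ℕ} {Γ : Type} (S : Scaffold d Γ) :
    ∀ (l : List (Fin d)) (v w : ℕ), S.follow l v = some w → w ≤ v := by
  intro l
  induction l with
  | nil =>
    intro v w h
    simp only [Scaffold.follow, Option.some_inj] at h
    omega
  | cons i l ih =>
    intro v w h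
    simp only [Scaffold.follow, Option.bind_eq_some_iff] at h
    obtain ⟨u, hu, hw⟩ := h
    exact le_trans (ih u w hw) (S.back v i u hu)

/-- The initial scaffold: a single unlabelled node with all edges missing. -/
def Scaffold.init (d : ℕ) (Γ : Type) : Scaffold d Γ where
  top := 0
  edge := fun _ _ => none
  label := fun _ => none
  back := by intro v i w h; exact absurd h (by simp)

/-- Appending a new top node with label `γ`, whose edges are determined by the
path specifications `ps` (followed from the old top node). -/
def Scaffold.extend {d k : ℕ} {Γ : Type} (S : Scaffold d Γ) (γ : Γ)
    (ps : Fin d → PathSpec d k) : Scaffold d Γ where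
  top := S.top + 1
  edge := fun v j =>
    if v = S.top + 1 then
      match ps j with
      | .missing => none
      | .self => some (S.top + 1)
      | .path l _ => S.follow l S.top
    else if v ≤ S.top then S.edge v j else none
  label := fun v =>
    if v = S.top + 1 then some γ else if v ≤ S.top then S.label v else none
  back := by
    intro v j w h
    try dsimp only at h
    split_ifs at h with h1 h2
    · subst h1
      rcases hps : ps j with ⟨l, hl⟩ | _ | _
      · rw [hps] at h
        have := S.follow_le l S.top w h
        omega
      · rw [hps] at h
        simp only [Option.some_inj] at h
        omega
      · rw [hps] at h
        exact absurd h (by simp)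
    · exact S.back v j w h

/-- A scaffolding automaton with input alphabet `σ`. -/
structure SAutomaton (σ : Type) : Type 1 where
  /-- degree -/
  d : ℕ
  dpos : 1 ≤ d
  /-- working alphabet -/
  Γ : Type
  finΓ : Finite Γ
  /-- distance -/
  k : ℕ
  /-- states -/
  Q : Type
  finQ : Finite Q
  /-- initial state -/
  q0 : Q
  /-- accepting states -/
  F : Set Q
  /-- transition function -/
  δ : Q → σ → Nbhd d Γ k → Q × Γ × (Fin d → PathSpec d k)

/-- A single step of computation of a scaffolding automaton on input symbol `a`. -/
def SAutomaton.step {σ : Type} (A : SAutomaton σ) (a : σ) :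
    A.Q × Scaffold A.d A.Γ → A.Q × Scaffold A.d A.Γ :=
  fun c =>
    let out := A.δ c.1 a (c.2.nbhd A.k c.2.top)
    (out.1, c.2.extend out.2.1 out.2.2)

/-- The state and scaffold reached by a scaffolding automaton after reading `x`. -/
def SAutomaton.run {σ : Type} (A : SAutomaton σ) (x : List σ) :
    A.Q × Scaffold A.d A.Γ :=
  x.foldl (fun c a => A.step a c) (A.q0, Scaffold.init A.d A.Γ)

/-- The language decided by a scaffolding automaton. -/
def SAutomaton.Lang {σ : Type} (A : SAutomaton σ) : Set (List σ) :=
  { x | (A.run x).1 ∈ A.F }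
/-! ## Online Turing machines and the equivalence-class counting method -/

/-- A head move of a Turing machine. -/
inductive TMMove : Type where
  | left : TMMove
  | stay : TMMove
  | right : TMMove

/-- The displacement of a head move. -/
def TMMove.offset : TMMove → ℤ
  | .left => -1
  | .stay => 0
  | .right => 1

/-- The shortest (most-significant-bit-first) binary representation of a
natural number, as a list of booleans; by convention `0` is represented by `"0"`. -/
def natBinRep (n : ℕ) : List Bool :=
  if n = 0 then [false] else (Nat.bits n).reverse

/-- An online (multi-tape) Turing machine with input alphabet `σ`: it has
`tapes + 1` work tapes (tape `0` being the auxiliary tape that initially holds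
the input length in binary), and a one-way read-only input tape.  At each step
the transition function sees the current state, the input symbol under the
input head (`none` when past the end of the input) and the symbols under the
work-tape heads, and produces a new state, a flag telling whether to advance
the input head (thereby reading a new input symbol), and a write/move action
for each work tape. -/
structure OnlineTM (σ : Type) : Type 1 where
  Q : Type
  finQ : Finite Q
  Γ : Type
  finΓ : Finite Γ
  blank : Γ
  sym0 : Γ
  sym1 : Γ
  tapes : ℕ
  q0 : Q
  Halt : Set Q
  F : Set Q
  δ : Q → Option σ → (Fin (tapes + 1) → Γ) →
        Q × Bool × (Fin (tapes + 1) → Γ × TMMove)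

/-- A configuration of an online Turing machine. -/
structure OCfg {σ : Type} (M : OnlineTM σ) : Type where
  q : M.Q
  ipos : ℕ
  hd : Fin (M.tapes + 1) → ℤ
  tape : Fin (M.tapes + 1) → ℤ → M.Γ

/-- The initial configuration on an input of length `n`: initial state, input
head at the start, work tapes blank except the auxiliary tape `0`, which holds
the binary representation of `n` in cells `0, …`. -/
def OnlineTM.initCfg {σ : Type} (M : OnlineTM σ) (n : ℕ) : OCfg M :=
  { q := M.q0
    ipos := 0
    hd := fun _ => 0
    tape := fun i p =>
      if i = 0 ∧ 0 ≤ p ∧ p < (natBinRep n).length then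
        (if (natBinRep n).getD p.toNat false then M.sym1 else M.sym0)
      else M.blank }

open scoped Classical in
/-- A single computation step of an online Turing machine on input `x`
(halting states are absorbing). -/
noncomputable def OnlineTM.stepCfg {σ : Type} (M : OnlineTM σ) (x : List σ)
    (c : OCfg M) : OCfg M :=
  if c.q ∈ M.Halt then c
  else
    let t := M.δ c.q x[c.ipos]? (fun i => c.tape i (c.hd i))
    { q := t.1
      ipos := if t.2.1 then c.ipos + 1 else c.ipos
      hd := fun i => c.hd i + (t.2.2 i).2.offset
      tape := fun i p => if p = c.hd i then (t.2.2 i).1 else c.tape i p }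

/-- The configuration of `M` on input `x` after `i` steps. -/
noncomputable def OnlineTM.runCfg {σ : Type} (M : OnlineTM σ) (x : List σ)
    (i : ℕ) : OCfg M :=
  (M.stepCfg x)^[i] (M.initCfg x.length)

/-- `M` decides `L` doing at most `t(n)` steps of computation per input symbol:
on every input `x` of length `n`, the machine halts after having read the whole
input, it accepts iff `x ∈ L`, and during the computation the input head never
stays put for more than `t(n)` consecutive steps (i.e. at most `t(n)` steps are
performed between consecutive readings of input symbols, before the first
reading and after the last one). -/
def OnlineTM.DecidesIn {σ : Type} (M : OnlineTM σ) (L : Set (List σ))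
    (t : ℕ → ℕ) : Prop :=
  ∀ x : List σ, ∃ N : ℕ,
    (M.runCfg x N).q ∈ M.Halt ∧
    (∀ i < N, (M.runCfg x i).q ∉ M.Halt) ∧
    (M.runCfg x N).ipos = x.length ∧
    ((M.runCfg x N).q ∈ M.F ↔ x ∈ L) ∧
    (∀ i j : ℕ, i ≤ j → j ≤ N →
      (M.runCfg x i).ipos = (M.runCfg x j).ipos → j - i ≤ t x.length)

/-- The class `Online(t(n))` of languages over `σ` decidable by an online
Turing machine doing at most `t(n)` steps of computation per input symbol. -/
def OnlineClass (σ : Type) (t : ℕ → ℕ) : Set (Set (List σ)) :=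
  { L | ∃ M : OnlineTM σ, M.DecidesIn L t }

/-- `(L,ℓ,m)`-equivalence (the parameter `ℓ` is implicit in the domain):
`y₁ ≡ y₂` iff appending any string of length `m` leads to the same
membership in `L`. -/
def LEquiv {σ : Type} (L : Set (List σ)) (m : ℕ) (y₁ y₂ : List σ) : Prop :=
  ∀ x : List σ, x.length = m → (y₁ ++ x ∈ L ↔ y₂ ++ x ∈ L)

/-- `E_L(ℓ,m)`: the number of equivalence classes of strings of length `ℓ`
under `(L,ℓ,m)`-equivalence. -/
noncomputable def numClasses {σ : Type} (L : Set (List σ)) (ℓ m : ℕ) : ℕ :=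
  Nat.card (Quot (fun y₁ y₂ : { y : List σ // y.length = ℓ } =>
    LEquiv L m y₁.1 y₂.1))

/-- `t(n) ∈ o(n/(log n)²)`, i.e. `t(n)·(log n)²/n → 0` as `n → ∞`. -/
def LittleOOfNOverLogSq (t : ℕ → ℕ) : Prop :=
  Filter.Tendsto (fun n : ℕ => (t n : ℝ) * (Real.log n) ^ 2 / n)
    Filter.atTop (nhds 0)

/-- The three-symbol alphabet `{0, 1, #}`. -/
inductive HSym : Type where
  | b0 : HSym
  | b1 : HSym
  | hash : HSym
  deriving DecidableEq

instance : Fintype HSym :=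
  ⟨{HSym.b0, HSym.b1, HSym.hash}, by intro x; cases x <;> simp⟩

/-- A string over `{0,1,#}` is *binary* if it contains no `#`. -/
def HSym.IsBin (w : List HSym) : Prop := HSym.hash ∉ w

/-- The language `K = { w₁#w₂#⋯#w_N#x : N ≥ 1, w₁,…,w_N,x ∈ {0,1}*, ∃ i, xʳ = wᵢ }`
over the alphabet `{0,1,#}`. -/
def LangK : Set (List HSym) :=
  { s | ∃ (ws : List (List HSym)) (x : List HSym),
      ws ≠ [] ∧ (∀ w ∈ ws, HSym.IsBin w) ∧ HSym.IsBin x ∧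
      s = (ws.map (fun w => w ++ [HSym.hash])).flatten ++ x ∧
      x.reverse ∈ ws }

/-- `|n|₂`: the length of the shortest binary representation of `n`
(with `|0|₂ = 1`). -/
def binLen (n : ℕ) : ℕ := max 1 n.size

/-- The length `ℓ_D = D + 1 + Σ_{n=0}^{2^(D+1)−1} (2·|n|₂ + 2)`. -/
def hardLen (D : ℕ) : ℕ :=
  D + 1 + ∑ n ∈ Finset.range (2 ^ (D + 1)), (2 * binLen n + 2)

/-!
The automaton keeps in its scaffold a stack of complete binary trees with boolean leaves, read
in postfix form; after the marker `11#` it descends the tree along the remaining input bits and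
accepts iff the leaf reached is labelled `1`. Padding the codes of the `2 ^ 2 ^ D` trees of depth
`D` to length `ℓ_D` gives pairwise inequivalent prefixes, separated by the `D`-bit addresses.

Conversely, once an online machine spending `t(n)` steps per symbol has read the first `ℓ`
symbols, it halts within `(m + 1)(t(n) + 1)` further steps, where `m = n - ℓ`. So acceptance of
every continuation is determined by the state and the tape contents within that distance of
the heads, and there are at most `|Q| |Γ| ^ O(m t(n))` classes. For `m = D` and
`n = ℓ_D + D = Θ(D 2^D)`, `t(n) = o(n / (log n)²)` makes this smaller than `2 ^ 2 ^ D`.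
-/

namespace Scaffold

variable {d k : ℕ} {Γ : Type}

structure IsPrefix (S S' : Scaffold d Γ) : Prop where
  top_le : S.top ≤ S'.top
  edge_eq : ∀ v ≤ S.top, ∀ j, S'.edge v j = S.edge v j
  label_eq : ∀ v ≤ S.top, S'.label v = S.label v

theorem IsPrefix.trans {S₁ S₂ S₃ : Scaffold d Γ} (h₁₂ : IsPrefix S₁ S₂) (h₂₃ : IsPrefix S₂ S₃) :
    IsPrefix S₁ S₃ where
  top_le := h₁₂.top_le.trans h₂₃.top_le
  edge_eq v hv j := by rw [h₂₃.edge_eq v (hv.trans h₁₂.top_le), h₁₂.edge_eq v hv]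
  label_eq v hv := by rw [h₂₃.label_eq v (hv.trans h₁₂.top_le), h₁₂.label_eq v hv]

@[simp]
theorem extend_top (S : Scaffold d Γ) (γ : Γ) (ps : Fin d → PathSpec d k) :
    (S.extend γ ps).top = S.top + 1 := rfl

theorem isPrefix_extend (S : Scaffold d Γ) (γ : Γ) (ps : Fin d → PathSpec d k) :
    IsPrefix S (S.extend γ ps) where
  top_le := by simp
  edge_eq v hv j := by simp [Scaffold.extend, hv, show v ≠ S.top + 1 by omega]
  label_eq v hv := by simp [Scaffold.extend, hv, show v ≠ S.top + 1 by omega]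

theorem extend_label_top (S : Scaffold d Γ) (γ : Γ) (ps : Fin d → PathSpec d k) :
    (S.extend γ ps).label (S.extend γ ps).top = some γ := by
  simp [Scaffold.extend]

theorem extend_edge_top_of_path (S : Scaffold d Γ) (γ : Γ) {ps : Fin d → PathSpec d k}
    {j : Fin d} {l : List (Fin d)} {hl : l.length ≤ k} (hj : ps j = .path l hl) :
    (S.extend γ ps).edge (S.extend γ ps).top j = S.follow l S.top := by
  simp [Scaffold.extend, hj]

theorem extend_edge_top_of_self (S : Scaffold d Γ) (γ : Γ) {ps : Fin d → PathSpec d k}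
    {j : Fin d} (hj : ps j = .self) :
    (S.extend γ ps).edge (S.extend γ ps).top j = some (S.extend γ ps).top := by
  simp [Scaffold.extend, hj]

@[simp]
theorem follow_nil (S : Scaffold d Γ) (v : ℕ) : S.follow [] v = some v := rfl

theorem follow_cons (S : Scaffold d Γ) (i : Fin d) (l : List (Fin d)) (v : ℕ) :
    S.follow (i :: l) v = (S.edge v i).bind fun u => S.follow l u := rfl

@[simp]
theorem follow_singleton (S : Scaffold d Γ) (i : Fin d) (v : ℕ) : S.follow [i] v = S.edge v i :=
  Option.bind_fun_some _

end Scaffold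

namespace SAutomaton

variable {σ : Type} (A : SAutomaton σ)

def runFrom (c : A.Q × Scaffold A.d A.Γ) (x : List σ) : A.Q × Scaffold A.d A.Γ :=
  x.foldl (fun c a => A.step a c) c

theorem run_eq_runFrom (x : List σ) : A.run x = A.runFrom (A.q0, Scaffold.init A.d A.Γ) x := rfl

@[simp]
theorem runFrom_nil (c : A.Q × Scaffold A.d A.Γ) : A.runFrom c [] = c := rfl

@[simp]
theorem runFrom_cons (c : A.Q × Scaffold A.d A.Γ) (a : σ) (x : List σ) :
    A.runFrom c (a :: x) = A.runFrom (A.step a c) x := rfl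

theorem runFrom_append (c : A.Q × Scaffold A.d A.Γ) (x y : List σ) :
    A.runFrom c (x ++ y) = A.runFrom (A.runFrom c x) y :=
  List.foldl_append

end SAutomaton

theorem two_pow_card_le_numClasses {σ ι : Type} [Finite σ] [Finite ι] (L : Set (List σ))
    (ℓ m : ℕ) (x : ι → List σ) (hx : ∀ i, (x i).length = m)
    (hy : ∀ g : ι → Bool, ∃ y : List σ, y.length = ℓ ∧ ∀ i, y ++ x i ∈ L ↔ g i = true) :
    2 ^ Nat.card ι ≤ numClasses L ℓ m := by
  choose y hyℓ hyL using hy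
  have : Finite {y : List σ // y.length = ℓ} := inferInstanceAs (Finite (List.Vector σ ℓ))
  let cls (g : ι → Bool) :
      Quot (fun y₁ y₂ : {y : List σ // y.length = ℓ} => LEquiv L m y₁.1 y₂.1) :=
    Quot.mk _ ⟨y g, hyℓ g⟩
  have hcls : Function.Injective cls := by
    intro g₁ g₂ h
    funext i
    have hmem := congrArg (Quot.lift (fun y => y.1 ++ x i ∈ L)
      (fun _ _ hy => propext (hy _ (hx i)))) h
    simp only [cls, hyL] at hmem
    exact Bool.eq_iff_iff.mpr hmem.to_iff
  calc 2 ^ Nat.card ι = Nat.card (ι → Bool) := by simp [Nat.card_fun]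
    _ ≤ numClasses L ℓ m := Nat.card_le_card_of_injective cls hcls

theorem numClasses_le_card {σ W : Type} [Finite W] (L : Set (List σ)) (ℓ m : ℕ)
    (w : {y : List σ // y.length = ℓ} → W) (hw : ∀ y₁ y₂, w y₁ = w y₂ → LEquiv L m y₁.1 y₂.1) :
    numClasses L ℓ m ≤ Nat.card W := by
  refine Nat.card_le_card_of_injective (fun c => w c.out) fun c₁ c₂ h => ?_
  rw [← c₁.out_eq, ← c₂.out_eq]
  exact Quot.sound (hw _ _ h)

theorem eight_mul_two_pow_le_hardLen (D : ℕ) : 8 * 2 ^ D ≤ hardLen D := by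
  have hsum : ∑ _n ∈ Finset.range (2 ^ (D + 1)), 4 ≤
      ∑ n ∈ Finset.range (2 ^ (D + 1)), (2 * binLen n + 2) :=
    Finset.sum_le_sum fun n _ => by have : 1 ≤ binLen n := le_max_left _ _; omega
  rw [Finset.sum_const, Finset.card_range, smul_eq_mul] at hsum
  rw [hardLen, pow_succ] at *
  omega

theorem hardLen_add_le (D : ℕ) : hardLen D + D ≤ 16 * 2 ^ D * (D + 1) := by
  have hsum : ∑ n ∈ Finset.range (2 ^ (D + 1)), (2 * binLen n + 2) ≤
      ∑ _n ∈ Finset.range (2 ^ (D + 1)), (2 * D + 4) :=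
    Finset.sum_le_sum fun n hn => by
      have : n.size ≤ D + 1 := Nat.size_le.2 (Finset.mem_range.1 hn)
      have : binLen n ≤ D + 1 := max_le (by omega) this
      omega
  rw [Finset.sum_const, Finset.card_range, smul_eq_mul] at hsum
  have : 1 ≤ 2 ^ D := Nat.one_le_two_pow
  rw [hardLen, pow_succ] at *
  nlinarith

theorem two_pow_le_hardLen_add (D : ℕ) : 2 ^ D ≤ hardLen D + D := by
  have := eight_mul_two_pow_le_hardLen D
  omega

def HSym.ofBool (b : Bool) : HSym := if b then .b1 else .b0

namespace HardLang

open Scaffold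

/-!
The automaton reads `0^j w 11# p`, where `w` is the postfix code of a complete binary tree
with boolean leaves and `p` is a leaf address. Edge `0` of the top node always points to the
*cursor*: the top of the stack of subtrees built so far, and later the current node of the
descent along `p`. Edge `1` of a stack entry points to the entry below it, and edges `2`, `3`
of an inner tree node point to its children along `0` and `1`.
-/

inductive HQ : Type where
  | build : Option Bool → HQ
  | seen11 : HQ
  | nav : Bool → HQ
  deriving Fintype

def child (b : Bool) : Fin 4 := if b then 3 else 2

def keepCursor : Fin 4 → PathSpec 4 3 := ![.path [0] (by simp), .missing, .missing, .missing]

def pushLeaf : Fin 4 → PathSpec 4 3 := ![.self, .path [0] (by simp), .missing, .missing]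

/-- Pops the two topmost subtrees and pushes the tree having them as children. -/
def combine : Fin 4 → PathSpec 4 3 :=
  ![.self, .path [0, 1, 1] (by simp), .path [0, 1] (by simp), .path [0] (by simp)]

def descend (b : Bool) : Fin 4 → PathSpec 4 3 :=
  ![.path [0, child b] (by simp), .missing, .missing, .missing]

def cursorLabel (N : Nbhd 4 Bool 3) : Bool :=
  ((N.2 0).bind fun M => M.1).getD false

def cursorChildLabel (N : Nbhd 4 Bool 3) (b : Bool) : Bool :=
  (((N.2 0).bind fun M => M.2 (child b)).bind fun M => M.1).getD false

def trans : HQ → HSym → Nbhd 4 Bool 3 → HQ × Bool × (Fin 4 → PathSpec 4 3)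
  | .build (some true), .b1, _ => (.seen11, false, keepCursor)
  | .build _, .b1, _ => (.build (some true), false, keepCursor)
  | .build _, .b0, _ => (.build (some false), false, keepCursor)
  | .build (some b), .hash, _ => (.build none, b, pushLeaf)
  | .build none, .hash, _ => (.build none, false, combine)
  | .seen11, .hash, N => (.nav (cursorLabel N), false, keepCursor)
  | .nav _, .b0, N => (.nav (cursorChildLabel N false), false, descend false)
  | .nav _, .b1, N => (.nav (cursorChildLabel N true), false, descend true)
  -- never reached on the words `hardWord D f ++ p` analysed below
  | _, _, _ => (.nav false, false, fun _ => .missing)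

abbrev automaton : SAutomaton HSym where
  d := 4
  dpos := by norm_num
  Γ := Bool
  finΓ := inferInstance
  k := 3
  Q := HQ
  finQ := inferInstance
  q0 := .build none
  F := {.nav true}
  δ := trans

section Steps

variable (S : Scaffold 4 Bool)

theorem step_bit {p : Option Bool} (hp : p ≠ some true) (b : Bool) :
    automaton.step (HSym.ofBool b) (.build p, S) =
      (.build (some b), S.extend false keepCursor) := by
  rcases p with _ | _ | _ <;> cases b <;> first | rfl | simp at hp

theorem step_hash_of_bit (b : Bool) :
    automaton.step .hash (.build (some b), S) = (.build none, S.extend b pushLeaf) := by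
  cases b <;> rfl

theorem step_hash_combine :
    automaton.step .hash (.build none, S) = (.build none, S.extend false combine) := rfl

theorem step_hash_seen11 :
    automaton.step .hash (.seen11, S) =
      (.nav (cursorLabel (S.nbhd 3 S.top)), S.extend false keepCursor) := rfl

theorem step_nav (b₀ b : Bool) :
    automaton.step (HSym.ofBool b) (.nav b₀, S) =
      (.nav (cursorChildLabel (S.nbhd 3 S.top) b), S.extend false (descend b)) := by
  cases b <;> rfl

end Steps

def cursor (S : Scaffold 4 Bool) : Option ℕ := S.edge S.top 0

section Cursor

variable {S : Scaffold 4 Bool}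

@[simp]
theorem cursor_extend_keepCursor (γ : Bool) : cursor (S.extend γ keepCursor) = cursor S :=
  (S.extend_edge_top_of_path γ (j := 0) (l := [0]) rfl).trans (by simp [cursor])

theorem cursorLabel_nbhd {v : ℕ} (hv : cursor S = some v) :
    cursorLabel (S.nbhd 3 S.top) = (S.label v).getD false := by
  simp only [cursor] at hv
  simp only [cursorLabel, Scaffold.nbhd, hv]
  rfl

theorem cursorChildLabel_nbhd {v u : ℕ} {b : Bool} (hv : cursor S = some v)
    (hu : S.edge v (child b) = some u) :
    cursorChildLabel (S.nbhd 3 S.top) b = (S.label u).getD false := by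
  simp only [cursor] at hv
  simp only [cursorChildLabel, Scaffold.nbhd, hv]
  change ((S.edge v (child b)).map _ |>.bind _).getD false = _
  rw [hu]
  rfl

end Cursor

/-- Node `v` of `S` is the root of a complete binary tree of depth `D` whose leaf at
address `p` is labelled `f p`. -/
def IsTreeAt (S : Scaffold 4 Bool) : ℕ → (List Bool → Bool) → ℕ → Prop
  | 0, f, v => S.label v = some (f [])
  | D + 1, f, v => ∀ b, ∃ u, S.edge v (child b) = some u ∧ IsTreeAt S D (fun p => f (b :: p)) u

theorem IsTreeAt.mono {S S' : Scaffold 4 Bool} {D : ℕ} {f : List Bool → Bool} {v : ℕ}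
    (h : IsTreeAt S D f v) (hv : v ≤ S.top) (hS : S.IsPrefix S') : IsTreeAt S' D f v := by
  induction D generalizing f v with
  | zero => exact (hS.label_eq v hv).trans h
  | succ D ih =>
    intro b
    obtain ⟨u, hu, hT⟩ := h b
    exact ⟨u, (hS.edge_eq v hv _).trans hu, ih hT ((S.back v _ u hu).trans hv)⟩

def treeCode : ℕ → (List Bool → Bool) → List HSym
  | 0, f => [HSym.ofBool (f []), .hash]
  | D + 1, f =>
    treeCode D (fun p => f (false :: p)) ++ treeCode D (fun p => f (true :: p)) ++ [.hash]

theorem length_treeCode (D : ℕ) (f : List Bool → Bool) :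
    (treeCode D f).length = 3 * 2 ^ D - 1 := by
  induction D generalizing f with
  | zero => rfl
  | succ D ih =>
    have : 1 ≤ 2 ^ D := Nat.one_le_two_pow
    simp only [treeCode, List.length_append, ih, List.length_singleton, pow_succ]
    omega

theorem runFrom_treeCode (D : ℕ) (f : List Bool → Bool) {p : Option Bool} (hp : p ≠ some true)
    (S : Scaffold 4 Bool) :
    ∃ S', automaton.runFrom (.build p, S) (treeCode D f) = (.build none, S') ∧
      S.IsPrefix S' ∧ cursor S' = some S'.top ∧ S'.edge S'.top 1 = cursor S ∧
      IsTreeAt S' D f S'.top := by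
  induction D generalizing f p S with
  | zero =>
    set S₁ := S.extend false keepCursor
    refine ⟨S₁.extend (f []) pushLeaf, ?_, (isPrefix_extend ..).trans (isPrefix_extend ..),
      S₁.extend_edge_top_of_self _ rfl, ?_, S₁.extend_label_top ..⟩
    · rw [treeCode, SAutomaton.runFrom_cons, step_bit _ hp, SAutomaton.runFrom_cons,
        step_hash_of_bit]
      rfl
    · rw [S₁.extend_edge_top_of_path _ (j := 1) (l := [0]) rfl, follow_singleton]
      exact cursor_extend_keepCursor false
  | succ D ih =>
    obtain ⟨S₁, hrun₁, hS₁, hcur₁, hnext₁, hT₁⟩ := ih (fun p => f (false :: p)) hp S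
    obtain ⟨S₂, hrun₂, hS₂, hcur₂, hnext₂, hT₂⟩ := ih (fun p => f (true :: p)) (p := none)
      (by simp) S₁
    unfold cursor at hcur₁ hcur₂ hnext₂
    have hS₃ : S₂.IsPrefix (S₂.extend false combine) := isPrefix_extend ..
    have hleft : (S₂.extend false combine).edge (S₂.extend false combine).top 2 = some S₁.top := by
      rw [S₂.extend_edge_top_of_path _ (j := 2) (l := [0, 1]) rfl]
      simp [follow_cons, hcur₂, hnext₂, hcur₁]
    have hright : (S₂.extend false combine).edge (S₂.extend false combine).top 3 = some S₂.top := by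
      rw [S₂.extend_edge_top_of_path _ (j := 3) (l := [0]) rfl, follow_singleton, hcur₂]
    refine ⟨S₂.extend false combine, ?_, (hS₁.trans hS₂).trans hS₃,
      S₂.extend_edge_top_of_self _ rfl, ?_, ?_⟩
    · rw [treeCode, SAutomaton.runFrom_append, SAutomaton.runFrom_append, hrun₁, hrun₂,
        SAutomaton.runFrom_cons, step_hash_combine]
      rfl
    · rw [S₂.extend_edge_top_of_path _ (j := 1) (l := [0, 1, 1]) rfl]
      simp [follow_cons, hcur₂, hnext₂, hcur₁, hS₂.edge_eq S₁.top le_rfl, hnext₁]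
    · rintro (_ | _)
      · exact ⟨_, hleft, hT₁.mono le_rfl (hS₂.trans hS₃)⟩
      · exact ⟨_, hright, hT₂.mono le_rfl hS₃⟩

theorem runFrom_replicate_b0 (j : ℕ) {p : Option Bool} (hp : p ≠ some true)
    (S : Scaffold 4 Bool) :
    ∃ p' S', p' ≠ some true ∧
      automaton.runFrom (.build p, S) (List.replicate j .b0) = (.build p', S') := by
  induction j generalizing p S with
  | zero => exact ⟨p, S, hp, rfl⟩
  | succ j ih =>
    obtain ⟨p', S', hp', hrun⟩ := ih (p := some false) (by simp) (S.extend false keepCursor)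
    refine ⟨p', S', hp', ?_⟩
    rw [List.replicate_succ, SAutomaton.runFrom_cons, ← hrun]
    exact congrArg (automaton.runFrom · _) (step_bit S hp false)

theorem runFrom_switch {S : Scaffold 4 Bool} {v : ℕ} (hv : cursor S = some v) (hvS : v ≤ S.top) :
    ∃ S', automaton.runFrom (.build none, S) [.b1, .b1, .hash] =
      (.nav ((S.label v).getD false), S') ∧ S.IsPrefix S' ∧ cursor S' = some v := by
  set S₂ := (S.extend false keepCursor).extend false keepCursor
  have hS₂ : S.IsPrefix S₂ := (isPrefix_extend ..).trans (isPrefix_extend ..)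
  have hv₂ : cursor S₂ = some v := by simp [S₂, hv]
  refine ⟨S₂.extend false keepCursor, ?_, hS₂.trans (isPrefix_extend ..), by simp [hv₂]⟩
  change automaton.step .hash (.seen11, S₂) = _
  rw [step_hash_seen11, cursorLabel_nbhd hv₂, hS₂.label_eq v hvS]

theorem runFrom_nav (p : List Bool) {f : List Bool → Bool} {v : ℕ} {S : Scaffold 4 Bool}
    (hT : IsTreeAt S p.length f v) (hvS : v ≤ S.top) (hv : cursor S = some v) :
    (automaton.runFrom (.nav ((S.label v).getD false), S) (p.map HSym.ofBool)).1 = .nav (f p) := by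
  induction p generalizing f v S with
  | nil => simp [show S.label v = some (f []) from hT]
  | cons b p ih =>
    obtain ⟨u, hu, hTu⟩ := hT b
    have huS : u ≤ S.top := (S.back v _ u hu).trans hvS
    have hS : S.IsPrefix (S.extend false (descend b)) := isPrefix_extend ..
    have hu' : cursor (S.extend false (descend b)) = some u := by
      rw [cursor, S.extend_edge_top_of_path _ (j := 0) (l := [0, child b]) rfl]
      unfold cursor at hv
      simp [follow_cons, hv, hu]
    rw [List.map_cons, SAutomaton.runFrom_cons, step_nav, cursorChildLabel_nbhd hv hu,
      ← hS.label_eq u huS]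
    exact ih (hTu.mono huS hS) (huS.trans hS.top_le) hu'

def hardWord (D : ℕ) (f : List Bool → Bool) : List HSym :=
  List.replicate (hardLen D - (3 * 2 ^ D + 2)) .b0 ++ treeCode D f ++ [.b1, .b1, .hash]

theorem hardWord_append_mem_iff (D : ℕ) (f : List Bool → Bool) {p : List Bool}
    (hp : p.length = D) :
    hardWord D f ++ p.map HSym.ofBool ∈ automaton.Lang ↔ f p = true := by
  obtain ⟨q, S₀, hq, hrun₀⟩ := runFrom_replicate_b0 (hardLen D - (3 * 2 ^ D + 2))
    (p := none) (by simp) (Scaffold.init 4 Bool)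
  obtain ⟨S₁, hrun₁, -, hcur₁, -, hT₁⟩ := runFrom_treeCode D f hq S₀
  obtain ⟨S₂, hrun₂, hS₂, hcur₂⟩ := runFrom_switch hcur₁ le_rfl
  have hrun : (automaton.run (hardWord D f ++ p.map HSym.ofBool)).1 = .nav (f p) := by
    rw [SAutomaton.run_eq_runFrom, hardWord, SAutomaton.runFrom_append,
      SAutomaton.runFrom_append, SAutomaton.runFrom_append, hrun₀, hrun₁, hrun₂,
      ← hS₂.label_eq _ le_rfl]
    exact runFrom_nav p (hp ▸ hT₁.mono le_rfl hS₂) hS₂.top_le hcur₂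
  simp [SAutomaton.Lang, hrun]

theorem length_hardWord (D : ℕ) (f : List Bool → Bool) : (hardWord D f).length = hardLen D := by
  have := eight_mul_two_pow_le_hardLen D
  have : 1 ≤ 2 ^ D := Nat.one_le_two_pow
  simp only [hardWord, List.length_append, List.length_replicate, length_treeCode,
    List.length_cons, List.length_nil]
  omega

theorem two_pow_two_pow_le_numClasses (D : ℕ) :
    2 ^ 2 ^ D ≤ numClasses automaton.Lang (hardLen D) D := by
  have hcard : Nat.card (List.Vector Bool D) = 2 ^ D := by simp [Nat.card_eq_fintype_card]
  refine hcard ▸ two_pow_card_le_numClasses _ _ _ (fun p => p.1.map HSym.ofBool)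
    (fun p => by simp [p.2]) fun g => ?_
  refine ⟨hardWord D fun p => if hp : p.length = D then g ⟨p, hp⟩ else false,
    length_hardWord .., fun p => ?_⟩
  rw [hardWord_append_mem_iff _ _ p.2, dif_pos p.2]
  rfl

end HardLang

theorem Finset.card_le_succ_of_forall_sub_le {s : Finset ℕ} {t : ℕ}
    (h : ∀ i ∈ s, ∀ j ∈ s, i ≤ j → j - i ≤ t) : s.card ≤ t + 1 := by
  rcases s.eq_empty_or_nonempty with rfl | hs
  · simp
  have hsub : s ⊆ Finset.Icc (s.min' hs) (s.min' hs + t) := fun j hj =>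
    Finset.mem_Icc.2 ⟨s.min'_le j hj, by
      have := h _ (s.min'_mem hs) j hj (s.min'_le j hj); omega⟩
  have := Finset.card_le_card hsub
  simp only [Nat.card_Icc] at this
  omega

theorem TMMove.natAbs_offset_le (m : TMMove) : m.offset.natAbs ≤ 1 := by
  cases m <;> simp [TMMove.offset]

namespace OnlineTM

variable {σ : Type} (M : OnlineTM σ)

theorem runCfg_succ (z : List σ) (i : ℕ) : M.runCfg z (i + 1) = M.stepCfg z (M.runCfg z i) :=
  Function.iterate_succ_apply' ..

theorem runCfg_add (z : List σ) (i j : ℕ) :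
    M.runCfg z (i + j) = (M.stepCfg z)^[j] (M.runCfg z i) := by
  rw [OnlineTM.runCfg, add_comm, Function.iterate_add_apply]
  rfl

theorem stepCfg_of_halt {z : List σ} {c : OCfg M} (h : c.q ∈ M.Halt) : M.stepCfg z c = c :=
  if_pos h

theorem stepCfg_ipos_eq_or (z : List σ) (c : OCfg M) :
    (M.stepCfg z c).ipos = c.ipos ∨ (M.stepCfg z c).ipos = c.ipos + 1 := by
  by_cases h : c.q ∈ M.Halt
  · exact .inl (by rw [M.stepCfg_of_halt h])
  · unfold OnlineTM.stepCfg
    rw [if_neg h]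
    dsimp only
    split_ifs <;> simp

theorem monotone_runCfg_ipos (z : List σ) : Monotone fun i => (M.runCfg z i).ipos :=
  monotone_nat_of_le_succ fun i => by
    rcases M.stepCfg_ipos_eq_or z (M.runCfg z i) with h | h <;> simp [runCfg_succ, h]

theorem runCfg_eq_of_halt {z : List σ} {N j : ℕ} (h : (M.runCfg z N).q ∈ M.Halt) (hj : N ≤ j) :
    M.runCfg z j = M.runCfg z N := by
  induction j, hj using Nat.le_induction with
  | base => rfl
  | succ j _ ih => rw [runCfg_succ, ih, M.stepCfg_of_halt h]

theorem exists_runCfg_ipos_eq {z : List σ} {ℓ N : ℕ} (h : ℓ ≤ (M.runCfg z N).ipos) :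
    ∃ τ, (M.runCfg z τ).ipos = ℓ ∧ ∀ j < τ, (M.runCfg z j).ipos < ℓ := by
  classical
  have hex : ∃ i, ℓ ≤ (M.runCfg z i).ipos := ⟨N, h⟩
  refine ⟨Nat.find hex, le_antisymm ?_ (Nat.find_spec hex),
    fun j hj => not_le.1 (Nat.find_min hex hj)⟩
  cases hτ : Nat.find hex with
  | zero => exact Nat.zero_le ℓ
  | succ τ =>
    have hlt := Nat.find_min hex (show τ < Nat.find hex by omega)
    rw [runCfg_succ]
    rcases M.stepCfg_ipos_eq_or z (M.runCfg z τ) with h' | h' <;> omega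

theorem runCfg_eq_of_forall_ipos_lt {z₁ z₂ : List σ} (hlen : z₁.length = z₂.length) {ℓ : ℕ}
    (hpre : ∀ p < ℓ, z₁[p]? = z₂[p]?) {i : ℕ} (hi : ∀ j < i, (M.runCfg z₁ j).ipos < ℓ) :
    M.runCfg z₁ i = M.runCfg z₂ i := by
  induction i with
  | zero => simp [OnlineTM.runCfg, hlen]
  | succ i ih =>
    have ih := ih fun j hj => hi j (by omega)
    rw [runCfg_succ, runCfg_succ, ← ih]
    unfold OnlineTM.stepCfg
    rw [hpre _ (hi i (by omega))]

/-- Pigeonhole: the head rests on each input position for at most `t + 1` steps. -/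
theorem sub_lt_of_steps_between_readings {z : List σ} {t τ N : ℕ} (hτN : τ ≤ N)
    (hseg : ∀ i j, i ≤ j → j ≤ N → (M.runCfg z i).ipos = (M.runCfg z j).ipos → j - i ≤ t) :
    N - τ < ((M.runCfg z N).ipos - (M.runCfg z τ).ipos + 1) * (t + 1) := by
  have hcard := Finset.card_le_mul_card_image_of_maps_to (f := fun i => (M.runCfg z i).ipos)
    (s := Finset.Icc τ N) (t := Finset.Icc (M.runCfg z τ).ipos (M.runCfg z N).ipos)
    (fun i hi => by
      rw [Finset.mem_Icc] at hi ⊢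
      exact ⟨M.monotone_runCfg_ipos z hi.1, M.monotone_runCfg_ipos z hi.2⟩)
    (t + 1) (fun p _ => Finset.card_le_succ_of_forall_sub_le fun i hi j hj hij => by
      simp only [Finset.mem_filter, Finset.mem_Icc] at hi hj
      exact hseg i j hij hj.1.2 (hi.2.trans hj.2.symm))
  have : (M.runCfg z τ).ipos ≤ (M.runCfg z N).ipos := M.monotone_runCfg_ipos z hτN
  simp only [Nat.card_Icc] at hcard
  rw [show (M.runCfg z N).ipos + 1 - (M.runCfg z τ).ipos =
    (M.runCfg z N).ipos - (M.runCfg z τ).ipos + 1 by omega, mul_comm] at hcard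
  omega

theorem exists_halt_le {L : Set (List σ)} {t : ℕ → ℕ} (hM : M.DecidesIn L t) (z : List σ)
    (τ : ℕ) :
    ∃ N, (M.runCfg z N).q ∈ M.Halt ∧ ((M.runCfg z N).q ∈ M.F ↔ z ∈ L) ∧
      N ≤ τ + (z.length - (M.runCfg z τ).ipos + 1) * (t z.length + 1) := by
  obtain ⟨N, hhalt, -, hpos, hacc, hseg⟩ := hM z
  refine ⟨N, hhalt, hacc, ?_⟩
  rcases le_total τ N with hτN | hNτ
  · have := M.sub_lt_of_steps_between_readings hτN hseg
    rw [hpos] at this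
    omega
  · exact le_add_right hNτ

structure AgreeNear (r : ℕ) (c₁ c₂ : OCfg M) : Prop where
  q_eq : c₁.q = c₂.q
  ipos_eq : c₁.ipos = c₂.ipos
  tape_eq : ∀ i (o : ℤ), o.natAbs ≤ r → c₁.tape i (c₁.hd i + o) = c₂.tape i (c₂.hd i + o)

variable {M}

theorem AgreeNear.mono {r r' : ℕ} {c₁ c₂ : OCfg M} (h : M.AgreeNear r c₁ c₂) (hr : r' ≤ r) :
    M.AgreeNear r' c₁ c₂ :=
  ⟨h.q_eq, h.ipos_eq, fun i o ho => h.tape_eq i o (ho.trans hr)⟩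

theorem AgreeNear.stepCfg {r : ℕ} {z₁ z₂ : List σ} {c₁ c₂ : OCfg M}
    (h : M.AgreeNear (r + 1) c₁ c₂) (hin : z₁[c₁.ipos]? = z₂[c₁.ipos]?) :
    M.AgreeNear r (M.stepCfg z₁ c₁) (M.stepCfg z₂ c₂) := by
  by_cases hh : c₁.q ∈ M.Halt
  · rw [M.stepCfg_of_halt hh, M.stepCfg_of_halt (h.q_eq ▸ hh)]
    exact h.mono r.le_succ
  have hread : (fun i => c₁.tape i (c₁.hd i)) = fun i => c₂.tape i (c₂.hd i) :=
    funext fun i => by simpa using h.tape_eq i 0 (by simp)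
  unfold OnlineTM.stepCfg
  rw [if_neg hh, if_neg (h.q_eq ▸ hh), ← h.q_eq, ← h.ipos_eq, ← hin, hread]
  refine ⟨rfl, rfl, fun i o ho => ?_⟩
  dsimp only
  set a := M.δ c₁.q z₁[c₁.ipos]? fun i => c₂.tape i (c₂.hd i)
  have hself : ∀ x : ℤ, x + ((a.2.2 i).2.offset + o) = x ↔ (a.2.2 i).2.offset + o = 0 := by
    intro x; omega
  simp only [add_assoc, hself]
  split_ifs
  · rfl
  · have := TMMove.natAbs_offset_le (a.2.2 i).2
    exact h.tape_eq i _ (by omega)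

theorem AgreeNear.iterate_stepCfg {z₁ z₂ : List σ} {ℓ : ℕ} (hsuf : ∀ p, ℓ ≤ p → z₁[p]? = z₂[p]?)
    {r j : ℕ} {c₁ c₂ : OCfg M} (h : M.AgreeNear (r + j) c₁ c₂) (hpos : ℓ ≤ c₁.ipos) :
    M.AgreeNear r ((M.stepCfg z₁)^[j] c₁) ((M.stepCfg z₂)^[j] c₂) := by
  induction j generalizing c₁ c₂ with
  | zero => exact h
  | succ j ih =>
    refine ih (h.stepCfg (hsuf _ hpos)) ?_
    rcases M.stepCfg_ipos_eq_or z₁ c₁ with h' | h' <;> omega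

variable (M)

def window (R : ℕ) (c : OCfg M) : M.Q × (Fin (M.tapes + 1) × Fin (2 * R + 1) → M.Γ) :=
  (c.q, fun io => c.tape io.1 (c.hd io.1 + ((io.2 : ℕ) - R : ℤ)))

variable {M}

theorem agreeNear_of_window_eq {R : ℕ} {c₁ c₂ : OCfg M} (h : M.window R c₁ = M.window R c₂)
    (hpos : c₁.ipos = c₂.ipos) : M.AgreeNear R c₁ c₂ := by
  refine ⟨congrArg Prod.fst h, hpos, fun i o ho => ?_⟩
  have := congrFun (congrArg Prod.snd h) (i, ⟨(o + R).toNat, by omega⟩)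
  simpa [window, Int.toNat_of_nonneg (show 0 ≤ o + R by omega)] using this

/-- Once the input head reaches position `ℓ`, the machine halts within
`(m + 1) * (t (ℓ + m) + 1)` steps, so its heads never leave the region on which the two
configurations agree. -/
theorem mem_iff_mem_of_agreeNear {L : Set (List σ)} {t : ℕ → ℕ} (hM : M.DecidesIn L t)
    {ℓ m : ℕ} {z₁ z₂ : List σ} (hz₁ : z₁.length = ℓ + m) (hz₂ : z₂.length = ℓ + m)
    (hsuf : ∀ p, ℓ ≤ p → z₁[p]? = z₂[p]?) {τ₁ τ₂ : ℕ} (hτ₁ : (M.runCfg z₁ τ₁).ipos = ℓ)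
    (h : M.AgreeNear ((m + 1) * (t (ℓ + m) + 1)) (M.runCfg z₁ τ₁) (M.runCfg z₂ τ₂)) :
    z₁ ∈ L ↔ z₂ ∈ L := by
  have hτ₂ : (M.runCfg z₂ τ₂).ipos = ℓ := h.ipos_eq ▸ hτ₁
  obtain ⟨N₁, hhalt₁, hacc₁, hN₁⟩ := M.exists_halt_le hM z₁ τ₁
  obtain ⟨N₂, hhalt₂, hacc₂, hN₂⟩ := M.exists_halt_le hM z₂ τ₂
  rw [hz₁, hτ₁, Nat.add_sub_cancel_left] at hN₁
  rw [hz₂, hτ₂, Nat.add_sub_cancel_left] at hN₂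
  have hend := (zero_add ((m + 1) * (t (ℓ + m) + 1)) ▸ h).iterate_stepCfg hsuf hτ₁.ge
  rw [← runCfg_add, ← runCfg_add, M.runCfg_eq_of_halt hhalt₁ hN₁,
    M.runCfg_eq_of_halt hhalt₂ hN₂] at hend
  rw [← hacc₁, ← hacc₂, hend.q_eq]

theorem numClasses_le [Inhabited σ] {L : Set (List σ)} {t : ℕ → ℕ} (hM : M.DecidesIn L t)
    (ℓ m : ℕ) :
    numClasses L ℓ m ≤
      Nat.card M.Q * Nat.card M.Γ ^ ((M.tapes + 1) * (2 * ((m + 1) * (t (ℓ + m) + 1)) + 1)) := by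
  have := M.finQ
  have := M.finΓ
  let pad (y : {y : List σ // y.length = ℓ}) : List σ := y.1 ++ List.replicate m default
  have hreach (y) :
      ∃ τ, (M.runCfg (pad y) τ).ipos = ℓ ∧ ∀ j < τ, (M.runCfg (pad y) j).ipos < ℓ := by
    obtain ⟨N, -, -, hN, -⟩ := hM (pad y)
    exact M.exists_runCfg_ipos_eq (N := N) (by rw [hN]; simp [pad, y.2])
  choose τ hτ hτlt using hreach
  have hrun (y : {y : List σ // y.length = ℓ}) (x : List σ) (hx : x.length = m) :
      M.runCfg (y.1 ++ x) (τ y) = M.runCfg (pad y) (τ y) :=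
    (M.runCfg_eq_of_forall_ipos_lt (by simp [pad, hx])
      (fun p hp => by simp [pad, List.getElem?_append_left (y.2 ▸ hp)]) (hτlt y)).symm
  refine (numClasses_le_card L ℓ m
    (fun y => M.window ((m + 1) * (t (ℓ + m) + 1)) (M.runCfg (pad y) (τ y)))
    fun y₁ y₂ hw x hx => ?_).trans (by simp [Nat.card_prod, Nat.card_fun])
  refine M.mem_iff_mem_of_agreeNear hM (ℓ := ℓ) (m := m) (by simp [y₁.2, hx])
    (by simp [y₂.2, hx]) (fun p hp => ?_) (τ₁ := τ y₁) (τ₂ := τ y₂) (by rw [hrun y₁ x hx, hτ]) ?_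
  · rw [List.getElem?_append_right (by rw [y₁.2]; exact hp),
      List.getElem?_append_right (by rw [y₂.2]; exact hp), y₁.2, y₂.2]
  · rw [hrun y₁ x hx, hrun y₂ x hx]
    exact agreeNear_of_window_eq hw (by rw [hτ, hτ])

end OnlineTM

open Filter Topology

theorem tendsto_hardLen_add_atTop : Tendsto (fun D => hardLen D + D) atTop atTop :=
  tendsto_atTop_mono (fun D => Nat.le_add_left D (hardLen D)) tendsto_id

/-- `256 = 16 * 4 ^ 2`, from `n ≤ 16 * 2 ^ D * (D + 1)` and `log n ≥ D log 2 ≥ (D + 1) / 4`. -/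
theorem mul_div_two_pow_le {D : ℕ} (hD : 1 ≤ D) {n x : ℝ} (hx : 0 ≤ x) (hlo : 2 ^ D ≤ n)
    (hhi : n ≤ 16 * 2 ^ D * (D + 1)) :
    (D + 1) * x / 2 ^ D ≤ 256 * (x * Real.log n ^ 2 / n) := by
  have hD' : (1 : ℝ) ≤ D := by exact_mod_cast hD
  have hlog : ((D : ℝ) + 1) / 4 ≤ Real.log n := by
    have h2 : (D : ℝ) * Real.log 2 ≤ Real.log n := by
      rw [← Real.log_pow]
      exact Real.log_le_log (by positivity) hlo
    nlinarith [Real.log_two_gt_d9]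
  calc (D + 1) * x / 2 ^ D = 256 * (x * (((D : ℝ) + 1) / 4) ^ 2 / (16 * 2 ^ D * (D + 1))) := by
        field_simp
        ring
    _ ≤ 256 * (x * Real.log n ^ 2 / n) := by
        gcongr
        exact lt_of_lt_of_le (by positivity) hlo

theorem tendsto_mul_div_two_pow_of_littleO {t : ℕ → ℕ} (ht : LittleOOfNOverLogSq t) :
    Tendsto (fun D : ℕ => ((D + 1) * (t (hardLen D + D) + 1) : ℝ) / 2 ^ D) atTop (𝓝 0) := by
  have hlin : Tendsto (fun D : ℕ => ((D : ℝ) + 1) / 2 ^ D) atTop (𝓝 0) := by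
    have := (tendsto_pow_const_div_const_pow_of_one_lt 1 one_lt_two).add
      (tendsto_pow_atTop_nhds_zero_of_lt_one (by norm_num : (0 : ℝ) ≤ 1 / 2) (by norm_num))
    rw [add_zero] at this
    refine this.congr fun D => ?_
    rw [pow_one, div_pow, one_pow, add_div, one_div]
  have hmain : Tendsto (fun D : ℕ => ((D : ℝ) + 1) * t (hardLen D + D) / 2 ^ D) atTop (𝓝 0) := by
    refine squeeze_zero' (Eventually.of_forall fun D => by positivity)
      (eventually_atTop.2 ⟨1, fun D hD => mul_div_two_pow_le hD (Nat.cast_nonneg _) ?_ ?_⟩)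
      (by simpa using (ht.comp tendsto_hardLen_add_atTop).const_mul 256)
    · exact_mod_cast two_pow_le_hardLen_add D
    · exact_mod_cast hardLen_add_le D
  simpa [mul_add, add_div] using hmain.add hlin

theorem mul_pow_lt_two_pow_two_pow {a g E D : ℕ} (h : a + g * E < 2 ^ D) :
    a * g ^ E < 2 ^ 2 ^ D :=
  calc a * g ^ E ≤ 2 ^ a * (2 ^ g) ^ E :=
        Nat.mul_le_mul Nat.lt_two_pow_self.le (Nat.pow_le_pow_left Nat.lt_two_pow_self.le E)
    _ = 2 ^ (a + g * E) := by rw [← pow_mul, ← pow_add]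
    _ < 2 ^ 2 ^ D := Nat.pow_lt_pow_right one_lt_two h

theorem exists_mul_pow_lt_two_pow_two_pow {t : ℕ → ℕ} (ht : LittleOOfNOverLogSq t) (a g T : ℕ) :
    ∃ D, a * g ^ (T * (2 * ((D + 1) * (t (hardLen D + D) + 1)) + 1)) < 2 ^ 2 ^ D := by
  obtain ⟨D, hD⟩ := (((tendsto_mul_div_two_pow_of_littleO ht).const_mul (a + 3 * g * T : ℝ)).eventually
    (gt_mem_nhds (by norm_num : (a + 3 * g * T : ℝ) * 0 < 1))).exists
  refine ⟨D, mul_pow_lt_two_pow_two_pow ?_⟩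
  set X := (D + 1) * (t (hardLen D + D) + 1)
  have hX : 1 ≤ X := Nat.one_le_iff_ne_zero.2 (by positivity)
  have hlt : (a + 3 * g * T) * X < 2 ^ D := by
    rw [← mul_div_assoc, div_lt_one (by positivity)] at hD
    exact_mod_cast hD
  have h₁ : a ≤ a * X := Nat.le_mul_of_pos_right a hX
  have h₂ : g * T ≤ g * T * X := Nat.le_mul_of_pos_right _ hX
  nlinarith

instance : Inhabited HSym := ⟨.b0⟩

/-- There is a language `H ⊆ {0,1,#}*` decided by some
scaffolding automaton with `E_H(ℓ_D, D) ≥ 2^(2^D)` for every `D`, where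
`ℓ_D = D + 1 + Σ_{n=0}^{2^(D+1)−1} (2·|n|₂ + 2) = O(D·2^D)`; consequently `H`
is not in `Online(t(n))` for any `t(n) = o(n/(log n)²)`. -/
theorem exists_hard_scaffolding_language :
    ∃ H : Set (List HSym),
      (∃ A : SAutomaton HSym, A.Lang = H) ∧
      (∀ D : ℕ, 2 ^ 2 ^ D ≤ numClasses H (hardLen D) D) ∧
      (∀ t : ℕ → ℕ, LittleOOfNOverLogSq t → H ∉ OnlineClass HSym t) := by
  refine ⟨HardLang.automaton.Lang, ⟨_, rfl⟩, HardLang.two_pow_two_pow_le_numClasses, ?_⟩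
  rintro t ht ⟨M, hM⟩
  obtain ⟨D, hD⟩ :=
    exists_mul_pow_lt_two_pow_two_pow ht (Nat.card M.Q) (Nat.card M.Γ) (M.tapes + 1)
  exact (hD.trans_le ((HardLang.two_pow_two_pow_le_numClasses D).trans
    (M.numClasses_le hM _ _))).false
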